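/- arXiv:1709.06961 — 5 statements merged into one kernel-verified Lean document; each statement's English description precedes it below -/
import Mathlib

section
/- Let n ≥ 1 and let A and G be real symmetric positive definite n×n matrices. Denote by A^{1/2} and G^{1/2} their (unique) positive semidefinite square roots, by ‖·‖_F the Frobenius norm, and by λ_min the smallest eigenvalue of G. Then ‖A^{1/2} − G^{1/2}‖_F² ≤ ‖A − G‖_F² / λ_min. -/
/-!
Write `E = A^{1/2} - G^{1/2}`. Then `A - G = A^{1/2} E + E G^{1/2}`, so
`tr(E (A - G)) = tr(E A^{1/2} E) + tr(E G^{1/2} E) ≥ √λ_min ‖E‖_F²`,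
because `A^{1/2} ≥ 0` and `G^{1/2} ≥ √λ_min` in the Loewner order.
Cauchy–Schwarz bounds the left side by `‖E‖_F ‖A - G‖_F`, whence `√λ_min ‖E‖_F ≤ ‖A - G‖_F`.
-/

open scoped MatrixOrder

lemma CFC.algebraMap_sqrt_le_sqrt {A : Type*} [PartialOrder A] [Ring A] [StarRing A]
    [TopologicalSpace A] [IsSemitopologicalRing A] [T2Space A] [StarOrderedRing A] [Algebra ℝ A]
    [ContinuousFunctionalCalculus ℝ A IsSelfAdjoint] [NonnegSpectrumClass ℝ A]
    {a : A} {r : ℝ} (ha : 0 ≤ a) (hr : algebraMap ℝ A r ≤ a) :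
    algebraMap ℝ A √r ≤ CFC.sqrt a := by
  rw [algebraMap_le_iff_le_spectrum] at hr ⊢
  rw [CFC.sqrt_eq_real_sqrt a, cfcₙ_eq_cfc, cfc_map_spectrum Real.sqrt a]
  rintro _ ⟨x, hx, rfl⟩
  exact Real.sqrt_le_sqrt (hr x hx)

namespace Matrix

variable {m : Type*} [Fintype m]

lemma IsHermitian.algebraMap_iInf_eigenvalues_le {𝕜 : Type*} [RCLike 𝕜] [DecidableEq m]
    {G : Matrix m m 𝕜} (hG : G.IsHermitian) :
    algebraMap ℝ _ (⨅ i, hG.eigenvalues i) ≤ G := by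
  rw [algebraMap_le_iff_le_spectrum, hG.spectrum_real_eq_range_eigenvalues]
  rintro _ ⟨i, rfl⟩
  exact ciInf_le (Finite.bddBelow_range _) i

lemma sum_sum_mul_eq_trace_transpose_mul (E F : Matrix m m ℝ) :
    ∑ i, ∑ j, E i j * F i j = (Eᵀ * F).trace := by
  rw [Finset.sum_comm]
  rfl

lemma sq_sum_sum_mul_le (E F : Matrix m m ℝ) :
    (∑ i, ∑ j, E i j * F i j) ^ 2 ≤ (∑ i, ∑ j, E i j ^ 2) * ∑ i, ∑ j, F i j ^ 2 := by
  simpa only [Fintype.sum_prod_type] using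
    Finset.sum_mul_sq_le_sq_mul_sq Finset.univ (fun p : m × m ↦ E p.1 p.2) (fun p ↦ F p.1 p.2)

lemma trace_mono {A B : Matrix m m ℝ} (h : A ≤ B) : A.trace ≤ B.trace :=
  (tracePositiveLinearMap m ℝ ℝ).monotone' h

variable [DecidableEq m] {S T : Matrix m m ℝ} {c : ℝ}

lemma mul_sum_sum_sq_sub_le_sum_sum_sub_mul_mul_self_sub_mul_self (hS : 0 ≤ S) (hc : 0 ≤ c)
    (hcT : algebraMap ℝ _ c ≤ T) :
    c * ∑ i, ∑ j, (S - T) i j ^ 2 ≤ ∑ i, ∑ j, (S - T) i j * (S * S - T * T) i j := by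
  set E := S - T
  have hT : 0 ≤ T := (algebraMap_nonneg _ hc).trans hcT
  have hE : star E = E := (IsSelfAdjoint.of_nonneg hS).sub (IsSelfAdjoint.of_nonneg hT)
  have hES : 0 ≤ (E * S * E).trace := by
    simpa [hE] using trace_mono (star_left_conjugate_le_conjugate hS E)
  have hET : c * (E * E).trace ≤ (E * T * E).trace := by
    simpa [hE, Algebra.algebraMap_eq_smul_one] using
      trace_mono (star_left_conjugate_le_conjugate hcT E)
  have hF : S * S - T * T = S * E + E * T := by simp only [E]; noncomm_ring
  have hsplit : (E * (S * S - T * T)).trace = (E * S * E).trace + (E * T * E).trace := by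
    rw [hF, Matrix.mul_add, trace_add, ← Matrix.mul_assoc, trace_mul_comm E (E * T)]
  simp only [sq, sum_sum_mul_eq_trace_transpose_mul]
  rw [← conjTranspose_eq_transpose_of_trivial, ← star_eq_conjTranspose, hE]
  linarith

lemma sq_mul_sum_sum_sq_sub_le_sum_sum_sq_mul_self_sub_mul_self (hS : 0 ≤ S) (hc : 0 ≤ c)
    (hcT : algebraMap ℝ _ c ≤ T) :
    c ^ 2 * ∑ i, ∑ j, (S - T) i j ^ 2 ≤ ∑ i, ∑ j, (S * S - T * T) i j ^ 2 := by
  set x := ∑ i, ∑ j, (S - T) i j ^ 2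
  set y := ∑ i, ∑ j, (S * S - T * T) i j ^ 2
  have hinner := mul_sum_sum_sq_sub_le_sum_sum_sub_mul_mul_self_sub_mul_self hS hc hcT
  have hcs := sq_sum_sum_mul_le (S - T) (S * S - T * T)
  rcases (show 0 ≤ x by positivity).eq_or_lt with hx | hx
  · rw [← hx, mul_zero]
    positivity
  · refine le_of_mul_le_mul_right ?_ hx
    calc c ^ 2 * x * x = (c * x) ^ 2 := by ring
      _ ≤ _ := pow_le_pow_left₀ (by positivity) hinner 2
      _ ≤ x * y := hcs
      _ = y * x := mul_comm x y

end Matrix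

theorem sqrt_perturbation_frobenius_bound_general
    {n : ℕ} (A G : Matrix (Fin n) (Fin n) ℝ)
    (hA : A.PosDef) (hG : G.PosDef) :
    ∑ i, ∑ j, ((CFC.sqrt A - CFC.sqrt G) i j) ^ 2 ≤
      (∑ i, ∑ j, ((A - G) i j) ^ 2) / (⨅ i, hG.isHermitian.eigenvalues i) := by
  rcases isEmpty_or_nonempty (Fin n) with _ | _
  · -- the empty infimum is the junk value `0`, and both sides vanish
    simp
  have hlam : 0 < ⨅ i, hG.isHermitian.eigenvalues i := by
    obtain ⟨i, hi⟩ := exists_eq_ciInf_of_finite (f := hG.isHermitian.eigenvalues)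
    exact hi ▸ hG.eigenvalues_pos i
  have key := Matrix.sq_mul_sum_sum_sq_sub_le_sum_sum_sq_mul_self_sub_mul_self
    (CFC.sqrt_nonneg A) (Real.sqrt_nonneg _)
    (CFC.algebraMap_sqrt_le_sqrt hG.posSemidef.nonneg hG.isHermitian.algebraMap_iInf_eigenvalues_le)
  rw [CFC.sqrt_mul_sqrt_self A hA.posSemidef.nonneg, CFC.sqrt_mul_sqrt_self G hG.posSemidef.nonneg,
    Real.sq_sqrt hlam.le] at key
  rw [le_div_iff₀ hlam]
  linarith

/-- **Matrix square-root perturbation bound (Lemma CholEV).**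
For real symmetric positive definite `n × n` matrices `A` and `G` (`n ≥ 1`), with `A^{1/2}`,
`G^{1/2}` their unique positive semidefinite square roots, `‖·‖_F` the Frobenius norm
(squared Frobenius norm written out as the sum of squares of entries), and `λ_min` the
smallest eigenvalue of `G`, we have
`‖A^{1/2} − G^{1/2}‖_F² ≤ ‖A − G‖_F² / λ_min`. -/
theorem sqrt_perturbation_frobenius_bound
    {n : ℕ} (hn : 1 ≤ n) (A G : Matrix (Fin n) (Fin n) ℝ)
    (hA : A.PosDef) (hG : G.PosDef) :
    ∑ i, ∑ j, ((CFC.sqrt A - CFC.sqrt G) i j) ^ 2 ≤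
      (∑ i, ∑ j, ((A - G) i j) ^ 2) / (⨅ i, hG.isHermitian.eigenvalues i) :=
  sqrt_perturbation_frobenius_bound_general A G hA hG
end

section
/- Let n ≥ 1, let M be a real symmetric positive semidefinite n×n matrix, and let a ≥ 0 be a real number such that M² − (2 + 2a²)·M + 4a²·I = 0, where I is the n×n identity matrix. Then the matrix N := (M + 2a·I) / (√2·(1 + a)) is symmetric positive semidefinite and satisfies N² = M; consequently N is the unique positive semidefinite square root of M. -/
/-!
The quadratic relation gives `(M + 2a)² = M² + 4aM + 4a² = 2(1 + a)² M`, so dividing `M + 2a` by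
`√2 (1 + a)` yields a square root of `M`; it is positive semidefinite as a nonnegative combination
of `M` and `I`. Uniqueness is that of positive square roots given by the continuous functional
calculus.
-/

open scoped MatrixOrder

theorem add_smul_one_sq_eq_smul_of_quadratic {R A : Type*} [CommRing R] [Ring A] [Algebra R A]
    {M : A} {a : R} (hquad : M ^ 2 - (2 + 2 * a ^ 2) • M + (4 * a ^ 2) • (1 : A) = 0) :
    (M + (2 * a) • (1 : A)) ^ 2 = (2 * (1 + a) ^ 2) • M := by
  have hM_sq : M ^ 2 = (2 + 2 * a ^ 2) • M - (4 * a ^ 2) • (1 : A) := by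
    rwa [sub_add, sub_eq_zero] at hquad
  calc (M + (2 * a) • (1 : A)) ^ 2 = M ^ 2 + (4 * a) • M + (4 * a ^ 2) • (1 : A) := by
        simp only [sq, add_mul, mul_add, mul_smul_comm, smul_mul_assoc, mul_one, one_mul]
        match_scalars <;> ring
    _ = (2 * (1 + a) ^ 2) • M := by
        rw [hM_sq]
        match_scalars <;> ring

theorem inv_smul_add_smul_one_sq_of_quadratic {K A : Type*} [Field K] [Ring A] [Algebra K A]
    {M : A} {a c : K} (hquad : M ^ 2 - (2 + 2 * a ^ 2) • M + (4 * a ^ 2) • (1 : A) = 0)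
    (hc : c ^ 2 = 2 * (1 + a) ^ 2) (hc0 : c ≠ 0) :
    (c⁻¹ • (M + (2 * a) • (1 : A))) ^ 2 = M := by
  rw [smul_pow, add_smul_one_sq_eq_smul_of_quadratic hquad, smul_smul, ← hc, inv_pow,
    inv_mul_cancel₀ (pow_ne_zero 2 hc0), one_smul]

theorem closed_form_psd_sqrt_general
    {n : ℕ} (M : Matrix (Fin n) (Fin n) ℝ) (hM : M.PosSemidef)
    (a : ℝ) (ha : 0 ≤ a)
    (hquad : M ^ 2 - (2 + 2 * a ^ 2) • M + (4 * a ^ 2) • (1 : Matrix (Fin n) (Fin n) ℝ) = 0) :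
    letI N : Matrix (Fin n) (Fin n) ℝ :=
      (Real.sqrt 2 * (1 + a))⁻¹ • (M + (2 * a) • (1 : Matrix (Fin n) (Fin n) ℝ))
    N.PosSemidef ∧ N ^ 2 = M ∧
      ∀ P : Matrix (Fin n) (Fin n) ℝ, P.PosSemidef → P ^ 2 = M → P = N := by
  set N : Matrix (Fin n) (Fin n) ℝ :=
    (Real.sqrt 2 * (1 + a))⁻¹ • (M + (2 * a) • (1 : Matrix (Fin n) (Fin n) ℝ))
  have hc_pos : 0 < Real.sqrt 2 * (1 + a) := by positivity
  have hN_psd : N.PosSemidef :=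
    (hM.add (Matrix.PosSemidef.one.smul (by positivity))).smul (inv_nonneg.mpr hc_pos.le)
  have hN_sq : N ^ 2 = M := by
    refine inv_smul_add_smul_one_sq_of_quadratic hquad ?_ hc_pos.ne'
    rw [mul_pow, Real.sq_sqrt zero_le_two]
  refine ⟨hN_psd, hN_sq, fun P hP hP_sq => ?_⟩
  exact (CFC.sq_eq_sq_iff P N hP.nonneg hN_psd.nonneg).mp (hP_sq.trans hN_sq.symm)

/-- **Closed-form positive semidefinite square root.**
Let `M` be a real symmetric positive semidefinite `n × n` matrix (`n ≥ 1`) and `a ≥ 0` with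
`M² − (2 + 2a²)·M + 4a²·I = 0`.  Then `N := (M + 2a·I) / (√2·(1 + a))` is symmetric positive
semidefinite, satisfies `N² = M`, and is the unique positive semidefinite square root of `M`. -/
theorem closed_form_psd_sqrt
    {n : ℕ} (hn : 1 ≤ n) (M : Matrix (Fin n) (Fin n) ℝ) (hM : M.PosSemidef)
    (a : ℝ) (ha : 0 ≤ a)
    (hquad : M ^ 2 - (2 + 2 * a ^ 2) • M + (4 * a ^ 2) • (1 : Matrix (Fin n) (Fin n) ℝ) = 0) :
    letI N : Matrix (Fin n) (Fin n) ℝ :=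
      (Real.sqrt 2 * (1 + a))⁻¹ • (M + (2 * a) • (1 : Matrix (Fin n) (Fin n) ℝ))
    N.PosSemidef ∧ N ^ 2 = M ∧
      ∀ P : Matrix (Fin n) (Fin n) ℝ, P.PosSemidef → P ^ 2 = M → P = N :=
  closed_form_psd_sqrt_general M hM a ha hquad
end

section
/- Fix K ≥ 2, h > 0, a vector η ∈ ℝ^K with η_i ≥ 0 for all i, and a vector V ∈ ℝ^K. With H, S, Q, Q^{1/2}, Δw, Σ^Q_∞, Q̃, Σ_∞ defined as in the context, set a := √(1 + VᵀV) and B := Q̃·(Σ_∞ + 2a·I_L) / (√2·(1 + a)), where I_L is the L×L identity. Then B·Bᵀ = Σ^Q_∞, i.e., B is a Cholesky-type square root of the limiting covariance matrix Σ^Q_∞. -/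
open Matrix Kronecker

/-- The set of strictly ordered index pairs `P = {(i,j) : 1 ≤ i < j ≤ K}`. -/
abbrev OrderedPairs (K : ℕ) : Type := {p : Fin K × Fin K // p.1 < p.2}

/-- The selection matrix `H` picking the strictly upper-triangular coordinates:
`H_{p,q} = 1` if `q = p` and `0` otherwise. -/
noncomputable abbrev selH (K : ℕ) : Matrix (OrderedPairs K) (Fin K × Fin K) ℝ :=
  Matrix.of fun p q => if q = p.1 then 1 else 0

/-- The commutation matrix `S`: `S_{(i,j),(k,l)} = 1` if `(k,l) = (j,i)` and `0` otherwise. -/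
noncomputable abbrev commS (K : ℕ) : Matrix (Fin K × Fin K) (Fin K × Fin K) ℝ :=
  Matrix.of fun p q => if q = p.swap then 1 else 0

/-! Put `M := H (I - S) (I ⊗ V Vᵀ) (I - S) Hᵀ`, so that `Σ_∞ + 2a I = 2 ((1 + a) I + M)`.
Because `(I - S) Hᵀ H (I - S) = I - S` and `V ⊗ V` is fixed by `S`, one gets `M² = (VᵀV) M`,
and then `a² = 1 + VᵀV` gives `((1 + a) I + M)² = (1 + a)² (I + M)`. The diagonal matrix
`D = Q^{1/2} ⊗ Q^{1/2}` commutes with `S` and is compressed by `H` to `Q̃`, whence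
`Q̃² = H (Q ⊗ Q) Hᵀ` and `Q̃ M Q̃ = H (I - S) (D (I ⊗ V Vᵀ) D) (I - S) Hᵀ
= h⁻¹ H (I - S) (Q ⊗ Δw Δwᵀ) (I - S) Hᵀ`. Altogether `B Bᵀ = 2 Q̃ (I + M) Q̃ = Σ^Q_∞`. -/

variable {K : ℕ}

lemma commS_mul_apply {n : Type*} [Fintype n] (X : Matrix (Fin K × Fin K) n ℝ)
    (p : Fin K × Fin K) (q : n) : (commS K * X) p q = X p.swap q := by
  simp [mul_apply]

lemma mul_commS_apply {n : Type*} [Fintype n] (X : Matrix n (Fin K × Fin K) ℝ)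
    (p : n) (q : Fin K × Fin K) : (X * commS K) p q = X p q.swap := by
  simp [mul_apply, ← Prod.swap_eq_iff_eq_swap]

lemma commS_transpose : (commS K)ᵀ = commS K := by
  ext p q
  simp only [transpose_apply, of_apply]
  congr 1
  exact propext ⟨fun h => by simp [h], fun h => by simp [h]⟩

lemma commS_mul_kronecker (A B : Matrix (Fin K) (Fin K) ℝ) :
    commS K * (A ⊗ₖ B) = (B ⊗ₖ A) * commS K := by
  ext p q
  simp [commS_mul_apply, mul_commS_apply, mul_comm]

lemma kronecker_vecMulVec_mul_commS (u v u' v' : Fin K → ℝ) :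
    (vecMulVec u v ⊗ₖ vecMulVec u' v') * commS K = vecMulVec u v' ⊗ₖ vecMulVec u' v := by
  ext p q
  simp only [mul_commS_apply, kroneckerMap_apply, vecMulVec_apply, Prod.fst_swap, Prod.snd_swap]
  ring

lemma mul_selH_transpose_apply {n : Type*} [Fintype n] (X : Matrix n (Fin K × Fin K) ℝ)
    (p : n) (q : OrderedPairs K) : (X * (selH K)ᵀ) p q = X p q.1 := by
  simp [mul_apply]

lemma selH_mul_selH_transpose : selH K * (selH K)ᵀ = 1 := by
  ext p q
  simp [mul_selH_transpose_apply, one_apply, Subtype.ext_iff, eq_comm]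

lemma selH_transpose_mul_selH :
    (selH K)ᵀ * selH K = diagonal fun q => if q.1 < q.2 then 1 else 0 := by
  ext q r
  simp only [mul_apply, transpose_apply, of_apply]
  rw [← Finset.sum_subtype (Finset.univ.filter fun p : Fin K × Fin K => p.1 < p.2) (by simp)
    fun p => (if q = p then (1 : ℝ) else 0) * if r = p then 1 else 0]
  by_cases hqr : q = r <;> simp [hqr]

lemma selH_mul_diagonal_mul_transpose_mul_selH (d : Fin K × Fin K → ℝ) :
    selH K * diagonal d * (selH K)ᵀ * selH K = selH K * diagonal d := by
  have hcomm : diagonal d * ((selH K)ᵀ * selH K) = (selH K)ᵀ * selH K * diagonal d := by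
    rw [selH_transpose_mul_selH, diagonal_mul_diagonal, diagonal_mul_diagonal]
    simp_rw [mul_comm]
  rw [Matrix.mul_assoc _ (selH K)ᵀ, Matrix.mul_assoc, hcomm, ← Matrix.mul_assoc,
    ← Matrix.mul_assoc, selH_mul_selH_transpose, Matrix.one_mul]

-- `E := Hᵀ H` projects onto the pairs with `i < j`; then `E + S E S = I - Δ` and
-- `E S + S E = S - Δ`, with `Δ` the projection onto the pairs with `i = j`.
lemma one_sub_commS_mul_selH_transpose_mul_selH_mul_one_sub_commS :
    (1 - commS K) * ((selH K)ᵀ * selH K) * (1 - commS K) = 1 - commS K := by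
  rw [selH_transpose_mul_selH]
  ext ⟨p1, p2⟩ ⟨q1, q2⟩
  simp only [Matrix.sub_mul, Matrix.mul_sub, Matrix.one_mul, Matrix.mul_one,
    Matrix.sub_apply, commS_mul_apply, mul_commS_apply, one_apply, diagonal_apply, of_apply,
    Prod.swap_prod_mk, Prod.mk.injEq]
  split_ifs <;> (try (exfalso; omega)) <;> norm_num

noncomputable def skewSandwich (X : Matrix (Fin K × Fin K) (Fin K × Fin K) ℝ) :
    Matrix (OrderedPairs K) (OrderedPairs K) ℝ :=
  selH K * (1 - commS K) * X * (1 - commS K) * (selH K)ᵀ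

lemma skewSandwich_smul (c : ℝ) (X : Matrix (Fin K × Fin K) (Fin K × Fin K) ℝ) :
    skewSandwich (c • X) = c • skewSandwich X := by
  simp only [skewSandwich, Matrix.mul_smul, Matrix.smul_mul]

lemma skewSandwich_sub (X Y : Matrix (Fin K × Fin K) (Fin K × Fin K) ℝ) :
    skewSandwich (X - Y) = skewSandwich X - skewSandwich Y := by
  simp only [skewSandwich, Matrix.mul_sub (selH K * (1 - commS K)) X Y, Matrix.sub_mul]

lemma skewSandwich_transpose (X : Matrix (Fin K × Fin K) (Fin K × Fin K) ℝ) :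
    (skewSandwich X)ᵀ = skewSandwich Xᵀ := by
  simp only [skewSandwich, transpose_mul, transpose_sub, transpose_one, commS_transpose,
    transpose_transpose, Matrix.mul_assoc]

lemma skewSandwich_mul_skewSandwich (X Y : Matrix (Fin K × Fin K) (Fin K × Fin K) ℝ) :
    skewSandwich X * skewSandwich Y = skewSandwich (X * (1 - commS K) * Y) := by
  calc skewSandwich X * skewSandwich Y
      = selH K * (1 - commS K) * X *
          ((1 - commS K) * ((selH K)ᵀ * selH K) * (1 - commS K)) * Y * (1 - commS K) *
          (selH K)ᵀ := by
        simp only [skewSandwich, Matrix.mul_assoc]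
    _ = skewSandwich (X * (1 - commS K) * Y) := by
        rw [one_sub_commS_mul_selH_transpose_mul_selH_mul_one_sub_commS]
        simp only [skewSandwich, Matrix.mul_assoc]

lemma skewSandwich_kronecker_vecMulVec (v : Fin K → ℝ) :
    skewSandwich (vecMulVec v v ⊗ₖ vecMulVec v v) = 0 := by
  rw [skewSandwich, Matrix.mul_assoc (selH K), Matrix.sub_mul (1 : Matrix _ _ ℝ), Matrix.one_mul,
    commS_mul_kronecker, kronecker_vecMulVec_mul_commS, sub_self, Matrix.mul_zero,
    Matrix.zero_mul, Matrix.zero_mul]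

lemma one_kronecker_vecMulVec_mul_one_sub_commS_mul_self (v : Fin K → ℝ) :
    (1 ⊗ₖ vecMulVec v v) * (1 - commS K) * (1 ⊗ₖ vecMulVec v v) =
      (v ⬝ᵥ v) • (1 ⊗ₖ vecMulVec v v) - vecMulVec v v ⊗ₖ vecMulVec v v := by
  rw [Matrix.mul_sub, Matrix.mul_one, Matrix.sub_mul, ← mul_kronecker_mul, Matrix.mul_assoc,
    commS_mul_kronecker, ← Matrix.mul_assoc, ← mul_kronecker_mul]
  simp only [Matrix.one_mul, Matrix.mul_one]
  rw [kronecker_vecMulVec_mul_commS, vecMulVec_mul_vecMulVec, vecMulVec_smul, kronecker_smul]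

lemma skewSandwich_one_kronecker_vecMulVec_mul_self (v : Fin K → ℝ) :
    skewSandwich (1 ⊗ₖ vecMulVec v v) * skewSandwich (1 ⊗ₖ vecMulVec v v) =
      (v ⬝ᵥ v) • skewSandwich (1 ⊗ₖ vecMulVec v v) := by
  rw [skewSandwich_mul_skewSandwich, one_kronecker_vecMulVec_mul_one_sub_commS_mul_self,
    skewSandwich_sub, skewSandwich_kronecker_vecMulVec, sub_zero, skewSandwich_smul]

lemma skewSandwich_one_kronecker_vecMulVec_transpose (v : Fin K → ℝ) :
    (skewSandwich (1 ⊗ₖ vecMulVec v v))ᵀ = skewSandwich (1 ⊗ₖ vecMulVec v v) := by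
  rw [skewSandwich_transpose, ← kroneckerMap_transpose, transpose_one, transpose_vecMulVec]

lemma kronecker_diagonal_transpose (d : Fin K → ℝ) :
    (diagonal d ⊗ₖ diagonal d)ᵀ = diagonal d ⊗ₖ diagonal d := by
  rw [← kroneckerMap_transpose, diagonal_transpose]

lemma selH_mul_kronecker_diagonal_mul_transpose_mul_selH (d : Fin K → ℝ) :
    selH K * (diagonal d ⊗ₖ diagonal d) * (selH K)ᵀ * selH K =
      selH K * (diagonal d ⊗ₖ diagonal d) := by
  rw [diagonal_kronecker_diagonal, selH_mul_diagonal_mul_transpose_mul_selH]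

lemma selH_transpose_mul_selH_mul_kronecker_diagonal_mul_transpose (d : Fin K → ℝ) :
    (selH K)ᵀ * (selH K * (diagonal d ⊗ₖ diagonal d) * (selH K)ᵀ) =
      (diagonal d ⊗ₖ diagonal d) * (selH K)ᵀ := by
  simpa only [transpose_mul, transpose_transpose, kronecker_diagonal_transpose, Matrix.mul_assoc]
    using congrArg transpose (selH_mul_kronecker_diagonal_mul_transpose_mul_selH (K := K) d)

lemma selH_sandwich_kronecker_diagonal_transpose (d : Fin K → ℝ) :
    (selH K * (diagonal d ⊗ₖ diagonal d) * (selH K)ᵀ)ᵀ =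
      selH K * (diagonal d ⊗ₖ diagonal d) * (selH K)ᵀ := by
  rw [transpose_mul, transpose_mul, transpose_transpose, kronecker_diagonal_transpose,
    Matrix.mul_assoc]

lemma selH_sandwich_kronecker_diagonal_mul_self (d : Fin K → ℝ) :
    selH K * (diagonal d ⊗ₖ diagonal d) * (selH K)ᵀ *
        (selH K * (diagonal d ⊗ₖ diagonal d) * (selH K)ᵀ) =
      selH K * ((diagonal d * diagonal d) ⊗ₖ (diagonal d * diagonal d)) * (selH K)ᵀ := by
  simp only [← Matrix.mul_assoc]
  rw [selH_mul_kronecker_diagonal_mul_transpose_mul_selH, Matrix.mul_assoc (selH K),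
    mul_kronecker_mul]

lemma selH_sandwich_kronecker_diagonal_mul_skewSandwich_mul_self (d : Fin K → ℝ)
    (X : Matrix (Fin K × Fin K) (Fin K × Fin K) ℝ) :
    selH K * (diagonal d ⊗ₖ diagonal d) * (selH K)ᵀ * skewSandwich X *
        (selH K * (diagonal d ⊗ₖ diagonal d) * (selH K)ᵀ) =
      skewSandwich ((diagonal d ⊗ₖ diagonal d) * X * (diagonal d ⊗ₖ diagonal d)) := by
  have hHD := selH_mul_kronecker_diagonal_mul_transpose_mul_selH (K := K) d
  have hHDT := selH_transpose_mul_selH_mul_kronecker_diagonal_mul_transpose (K := K) d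
  set D := diagonal d ⊗ₖ diagonal d
  have hDS : D * (1 - commS K) = (1 - commS K) * D := by
    rw [Matrix.mul_sub, Matrix.sub_mul, Matrix.mul_one, Matrix.one_mul, commS_mul_kronecker]
  calc selH K * D * (selH K)ᵀ * skewSandwich X * (selH K * D * (selH K)ᵀ)
      = selH K * D * (selH K)ᵀ * selH K * (1 - commS K) * X * (1 - commS K) *
          ((selH K)ᵀ * (selH K * D * (selH K)ᵀ)) := by
        simp only [skewSandwich, Matrix.mul_assoc]
    _ = selH K * (D * (1 - commS K)) * X * ((1 - commS K) * D) * (selH K)ᵀ := by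
        rw [hHD, hHDT]
        simp only [Matrix.mul_assoc]
    _ = skewSandwich (D * X * D) := by
        rw [hDS]
        nth_rewrite 2 [← hDS]
        simp only [skewSandwich, Matrix.mul_assoc]

lemma kronecker_diagonal_sandwich_one_kronecker_vecMulVec (d v : Fin K → ℝ) :
    (diagonal d ⊗ₖ diagonal d) * (1 ⊗ₖ vecMulVec v v) * (diagonal d ⊗ₖ diagonal d) =
      (diagonal d * diagonal d) ⊗ₖ vecMulVec (diagonal d *ᵥ v) (diagonal d *ᵥ v) := by
  rw [← mul_kronecker_mul, ← mul_kronecker_mul, Matrix.mul_one, mul_vecMulVec, vecMulVec_mul]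
  congr 2
  ext i
  simp [vecMul_diagonal, mulVec_diagonal, mul_comm]

lemma diagonal_sqrt_mul_self {n : Type*} [Fintype n] [DecidableEq n] {η : n → ℝ}
    (hη : ∀ i, 0 ≤ η i) :
    (diagonal fun i => Real.sqrt (η i)) * (diagonal fun i => Real.sqrt (η i)) = diagonal η := by
  rw [diagonal_mul_diagonal]
  exact congrArg diagonal (funext fun i => Real.mul_self_sqrt (hη i))

lemma smul_one_add_mul_self_of_mul_self_eq_smul {R A : Type*} [CommRing R] [Ring A] [Algebra R A]
    {M : A} {a s : R} (hM : M * M = s • M) (ha : a * a = 1 + s) :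
    ((1 + a) • 1 + M) * ((1 + a) • 1 + M) = ((1 + a) * (1 + a)) • (1 + M) := by
  have hs : s = a * a - 1 := by rw [ha]; ring
  simp only [add_mul, mul_add, one_mul, mul_one, smul_mul_assoc, mul_smul_comm, hM, hs]
  module

lemma factor_mul_transpose_of_mul_self_eq_smul {n : Type*} [Fintype n] [DecidableEq n]
    {T M : Matrix n n ℝ} {a s : ℝ} (hT : Tᵀ = T) (hMT : Mᵀ = M) (hM : M * M = s • M)
    (ha : a * a = 1 + s) (ha0 : 0 ≤ a) :
    (Real.sqrt 2 * (1 + a))⁻¹ • (T * ((2 : ℝ) • 1 + (2 : ℝ) • M + (2 * a) • 1)) *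
        ((Real.sqrt 2 * (1 + a))⁻¹ • (T * ((2 : ℝ) • 1 + (2 : ℝ) • M + (2 * a) • 1)))ᵀ =
      (2 : ℝ) • (T * (1 + M) * T) := by
  have ha1 : 0 < 1 + a := by positivity
  have hY : (2 : ℝ) • 1 + (2 : ℝ) • M + (2 * a) • 1 = (2 : ℝ) • ((1 + a) • 1 + M) := by module
  have hc : (Real.sqrt 2 * (1 + a))⁻¹ * 2 = Real.sqrt 2 / (1 + a) := by
    field_simp
    rw [Real.sq_sqrt zero_le_two]
  have hc2 : Real.sqrt 2 / (1 + a) * (Real.sqrt 2 / (1 + a)) * ((1 + a) * (1 + a)) = 2 := by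
    field_simp
    rw [Real.sq_sqrt zero_le_two]
  rw [hY, Matrix.mul_smul, smul_smul, hc, transpose_smul, transpose_mul, transpose_add,
    transpose_smul, transpose_one, hMT, hT, smul_mul_smul_comm, Matrix.mul_assoc T,
    ← Matrix.mul_assoc _ _ T, smul_one_add_mul_self_of_mul_self_eq_smul hM ha, Matrix.smul_mul,
    Matrix.mul_smul, smul_smul, hc2, Matrix.mul_assoc]

theorem cholesky_sqrt_of_limiting_covariance_general
    (K : ℕ) (h : ℝ) (hh : 0 < h)
    (η V : Fin K → ℝ) (hη : ∀ i, 0 ≤ η i) :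
    letI Q : Matrix (Fin K) (Fin K) ℝ := Matrix.diagonal η
    letI Qhalf : Matrix (Fin K) (Fin K) ℝ := Matrix.diagonal fun i => Real.sqrt (η i)
    letI Δw : Fin K → ℝ := Real.sqrt h • Qhalf.mulVec V
    letI SQinf : Matrix (OrderedPairs K) (OrderedPairs K) ℝ :=
      (2 : ℝ) • (selH K * (Q ⊗ₖ Q) * (selH K)ᵀ) +
        (2 / h) • (selH K * (1 - commS K) * (Q ⊗ₖ Matrix.vecMulVec Δw Δw) *
          (1 - commS K) * (selH K)ᵀ)
    letI Qt : Matrix (OrderedPairs K) (OrderedPairs K) ℝ :=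
      selH K * (Qhalf ⊗ₖ Qhalf) * (selH K)ᵀ
    letI Sinf : Matrix (OrderedPairs K) (OrderedPairs K) ℝ :=
      (2 : ℝ) • (1 : Matrix (OrderedPairs K) (OrderedPairs K) ℝ) +
        (2 : ℝ) • (selH K * (1 - commS K) *
          ((1 : Matrix (Fin K) (Fin K) ℝ) ⊗ₖ Matrix.vecMulVec V V) *
          (1 - commS K) * (selH K)ᵀ)
    letI a : ℝ := Real.sqrt (1 + ∑ i, V i * V i)
    letI B : Matrix (OrderedPairs K) (OrderedPairs K) ℝ :=
      (Real.sqrt 2 * (1 + a))⁻¹ •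
        (Qt * (Sinf + (2 * a) • (1 : Matrix (OrderedPairs K) (OrderedPairs K) ℝ)))
    B * Bᵀ = SQinf := by
  have hΔw (x : Fin K → ℝ) :
      vecMulVec (Real.sqrt h • x) (Real.sqrt h • x) = h • vecMulVec x x := by
    rw [smul_vecMulVec, vecMulVec_smul, smul_smul, Real.mul_self_sqrt hh.le]
  have ha : Real.sqrt (1 + ∑ i, V i * V i) * Real.sqrt (1 + ∑ i, V i * V i) = 1 + V ⬝ᵥ V :=
    Real.mul_self_sqrt (add_nonneg zero_le_one (Finset.sum_nonneg fun i _ => mul_self_nonneg _))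
  rw [← skewSandwich.eq_1, ← skewSandwich.eq_1,
    factor_mul_transpose_of_mul_self_eq_smul (selH_sandwich_kronecker_diagonal_transpose _)
      (skewSandwich_one_kronecker_vecMulVec_transpose V)
      (skewSandwich_one_kronecker_vecMulVec_mul_self V) ha (Real.sqrt_nonneg _),
    Matrix.mul_add, Matrix.add_mul, Matrix.mul_one, smul_add,
    selH_sandwich_kronecker_diagonal_mul_self,
    selH_sandwich_kronecker_diagonal_mul_skewSandwich_mul_self,
    kronecker_diagonal_sandwich_one_kronecker_vecMulVec, diagonal_sqrt_mul_self hη, hΔw,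
    kronecker_smul, skewSandwich_smul, smul_smul, div_mul_cancel₀ _ hh.ne']

/-- **Cholesky-type square root of the limiting covariance matrix `Σ^Q_∞`.**
Fix `K ≥ 2`, `h > 0`, `η ∈ ℝ^K` with nonnegative entries, and `V ∈ ℝ^K`.  With
`Q = diag(η)`, `Q^{1/2} = diag(√η)`, `Δw = √h·Q^{1/2}·V`,
`Σ^Q_∞ = 2·H·(Q ⊗ Q)·Hᵀ + (2/h)·H·(I − S)·(Q ⊗ (Δw·Δwᵀ))·(I − S)·Hᵀ`,
`Q̃ = H·(Q^{1/2} ⊗ Q^{1/2})·Hᵀ`,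
`Σ_∞ = 2·I_L + 2·H·(I − S)·(I_K ⊗ V·Vᵀ)·(I − S)·Hᵀ`, and `a = √(1 + VᵀV)`, the matrix
`B := Q̃·(Σ_∞ + 2a·I_L) / (√2·(1 + a))` satisfies `B·Bᵀ = Σ^Q_∞`. -/
theorem cholesky_sqrt_of_limiting_covariance
    (K : ℕ) (hK : 2 ≤ K) (h : ℝ) (hh : 0 < h)
    (η V : Fin K → ℝ) (hη : ∀ i, 0 ≤ η i) :
    letI Q : Matrix (Fin K) (Fin K) ℝ := Matrix.diagonal η
    letI Qhalf : Matrix (Fin K) (Fin K) ℝ := Matrix.diagonal fun i => Real.sqrt (η i)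
    letI Δw : Fin K → ℝ := Real.sqrt h • Qhalf.mulVec V
    letI SQinf : Matrix (OrderedPairs K) (OrderedPairs K) ℝ :=
      (2 : ℝ) • (selH K * (Q ⊗ₖ Q) * (selH K)ᵀ) +
        (2 / h) • (selH K * (1 - commS K) * (Q ⊗ₖ Matrix.vecMulVec Δw Δw) *
          (1 - commS K) * (selH K)ᵀ)
    letI Qt : Matrix (OrderedPairs K) (OrderedPairs K) ℝ :=
      selH K * (Qhalf ⊗ₖ Qhalf) * (selH K)ᵀ
    letI Sinf : Matrix (OrderedPairs K) (OrderedPairs K) ℝ :=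
      (2 : ℝ) • (1 : Matrix (OrderedPairs K) (OrderedPairs K) ℝ) +
        (2 : ℝ) • (selH K * (1 - commS K) *
          ((1 : Matrix (Fin K) (Fin K) ℝ) ⊗ₖ Matrix.vecMulVec V V) *
          (1 - commS K) * (selH K)ᵀ)
    letI a : ℝ := Real.sqrt (1 + ∑ i, V i * V i)
    letI B : Matrix (OrderedPairs K) (OrderedPairs K) ℝ :=
      (Real.sqrt 2 * (1 + a))⁻¹ •
        (Qt * (Sinf + (2 * a) • (1 : Matrix (OrderedPairs K) (OrderedPairs K) ℝ)))
    B * Bᵀ = SQinf :=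
  cholesky_sqrt_of_limiting_covariance_general K h hh η V hη
end

section
/- Fix K ≥ 2, h > 0, a vector V ∈ ℝ^K, and a vector η ∈ ℝ^K with nonnegative entries. With H, S, Q, Q^{1/2}, Δw, Σ^Q_∞ defined as in the context, the entries of Σ^Q_∞ (rows and columns indexed by pairs (i,j) with i < j) are given explicitly as follows. Diagonal entries: (Σ^Q_∞)_{(i,j),(i,j)} = 2·η_i·η_j + (2/h)·η_i·(Δw_j)² + (2/h)·η_j·(Δw_i)². Off-diagonal entries, for (i,j) ≠ (m,n) with i < j and m < n: (Σ^Q_∞)_{(i,j),(m,n)} = 0 if {i,j} ∩ {m,n} = ∅; = (2/h)·η_i·Δw_j·Δw_n if i = m and j ≠ n; = −(2/h)·η_i·Δw_j·Δw_m if i = n and j ≠ m; = −(2/h)·η_j·Δw_i·Δw_n if j = m and i ≠ n; = (2/h)·η_j·Δw_i·Δw_m if j = n and i ≠ m. -/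
/-!
`H M Hᵀ` merely restricts `M` to ordered pairs, and conjugating by `I − S` antisymmetrises both
indices: `((I − S) M (I − S))_{a,b} = M_{a,b} − M_{a*,b} − M_{a,b*} + M_{a*,b*}` with `*` the swap.
Since `(Q ⊗ Δw Δwᵀ)_{(i,j),(m,n)} = Q_{im} Δw_j Δw_n`, every entry of `Σ^Q_∞` is
`2 Q_{im} Q_{jn} + (2/h) (Q_{im} Δw_j Δw_n − Q_{jm} Δw_i Δw_n − Q_{in} Δw_j Δw_m + Q_{jn} Δw_i Δw_m)`,
and the orderings `i < j`, `m < n` decide which of the Kronecker deltas in `Q` survive.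
-/

open Matrix Kronecker

section

variable {K : ℕ}

lemma selH_mul_mul_transpose_apply (M : Matrix (Fin K × Fin K) (Fin K × Fin K) ℝ)
    (p q : OrderedPairs K) : (selH K * M * (selH K)ᵀ) p q = M p.1 q.1 := by
  simp [Matrix.mul_apply, ite_mul, mul_ite]

lemma commS_mul_apply_s6 (M : Matrix (Fin K × Fin K) (Fin K × Fin K) ℝ) (a b : Fin K × Fin K) :
    (commS K * M) a b = M a.swap b := by
  simp [Matrix.mul_apply]

lemma mul_commS_apply_s6 (M : Matrix (Fin K × Fin K) (Fin K × Fin K) ℝ) (a b : Fin K × Fin K) :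
    (M * commS K) a b = M a b.swap := by
  simp [Matrix.mul_apply, eq_comm (a := b), Prod.swap_eq_iff_eq_swap]

lemma one_sub_commS_mul_mul_one_sub_commS_apply (M : Matrix (Fin K × Fin K) (Fin K × Fin K) ℝ)
    (a b : Fin K × Fin K) :
    ((1 - commS K) * M * (1 - commS K)) a b = M a b - M a.swap b - M a b.swap + M a.swap b.swap := by
  simp only [Matrix.sub_mul, Matrix.mul_sub, Matrix.one_mul, Matrix.mul_one, Matrix.sub_apply,
    commS_mul_apply_s6, mul_commS_apply_s6]
  ring

lemma limitingCovariance_apply (η w : Fin K → ℝ) (c : ℝ) {i j m n : Fin K} (hij : i < j)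
    (hmn : m < n) :
    ((2 : ℝ) • (selH K * (diagonal η ⊗ₖ diagonal η) * (selH K)ᵀ) +
        c • (selH K * (1 - commS K) * (diagonal η ⊗ₖ vecMulVec w w) * (1 - commS K) *
          (selH K)ᵀ) : Matrix (OrderedPairs K) (OrderedPairs K) ℝ) ⟨(i, j), hij⟩ ⟨(m, n), hmn⟩ =
      2 * (diagonal η i m * diagonal η j n) +
        c * (diagonal η i m * (w j * w n) - diagonal η j m * (w i * w n)
          - diagonal η i n * (w j * w m) + diagonal η j n * (w i * w m)) := by
  rw [Matrix.mul_assoc (selH K) (1 - commS K), Matrix.mul_assoc (selH K) ((1 - commS K) * _)]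
  simp only [Matrix.add_apply, Matrix.smul_apply, selH_mul_mul_transpose_apply,
    one_sub_commS_mul_mul_one_sub_commS_apply, Prod.swap_prod_mk, kroneckerMap_apply,
    vecMulVec_apply, smul_eq_mul]

end

theorem limiting_covariance_entries_general
    (K : ℕ) (h : ℝ) (V η : Fin K → ℝ) :
    letI Q : Matrix (Fin K) (Fin K) ℝ := Matrix.diagonal η
    letI Qhalf : Matrix (Fin K) (Fin K) ℝ := Matrix.diagonal fun i => Real.sqrt (η i)
    letI Δw : Fin K → ℝ := Real.sqrt h • Qhalf.mulVec V
    letI SQinf : Matrix (OrderedPairs K) (OrderedPairs K) ℝ :=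
      (2 : ℝ) • (selH K * (Q ⊗ₖ Q) * (selH K)ᵀ) +
        (2 / h) • (selH K * (1 - commS K) * (Q ⊗ₖ Matrix.vecMulVec Δw Δw) *
          (1 - commS K) * (selH K)ᵀ)
    ∀ p q : OrderedPairs K,
      letI i := p.1.1; letI j := p.1.2; letI m := q.1.1; letI n := q.1.2
      (p = q →
        SQinf p q = 2 * η i * η j + (2 / h) * η i * (Δw j) ^ 2 + (2 / h) * η j * (Δw i) ^ 2) ∧
      (i ≠ m → i ≠ n → j ≠ m → j ≠ n → SQinf p q = 0) ∧
      (i = m → j ≠ n → SQinf p q = (2 / h) * η i * Δw j * Δw n) ∧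
      (i = n → j ≠ m → SQinf p q = -((2 / h) * η i * Δw j * Δw m)) ∧
      (j = m → i ≠ n → SQinf p q = -((2 / h) * η j * Δw i * Δw n)) ∧
      (j = n → i ≠ m → SQinf p q = (2 / h) * η j * Δw i * Δw m) := by
  rintro ⟨⟨i, j⟩, hij⟩ ⟨⟨m, n⟩, hmn⟩
  simp only [limitingCovariance_apply]
  refine ⟨?_, ?_, ?_, ?_, ?_, ?_⟩
  · rintro ⟨⟩
    simp only [diagonal_apply_eq, diagonal_apply_ne _ hij.ne, diagonal_apply_ne _ hij.ne']
    ring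
  · intro him hin hjm hjn
    simp only [diagonal_apply_ne _ him, diagonal_apply_ne _ hin, diagonal_apply_ne _ hjm,
      diagonal_apply_ne _ hjn]
    ring
  · rintro rfl hjn
    simp only [diagonal_apply_eq, diagonal_apply_ne _ hjn, diagonal_apply_ne _ hij.ne',
      diagonal_apply_ne _ hmn.ne]
    ring
  · rintro rfl hjm
    simp only [diagonal_apply_eq, diagonal_apply_ne _ hjm, diagonal_apply_ne _ hij.ne',
      diagonal_apply_ne _ hmn.ne']
    ring
  · rintro rfl hin
    simp only [diagonal_apply_eq, diagonal_apply_ne _ hin, diagonal_apply_ne _ hij.ne,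
      diagonal_apply_ne _ hmn.ne]
    ring
  · rintro rfl him
    simp only [diagonal_apply_eq, diagonal_apply_ne _ him, diagonal_apply_ne _ hij.ne,
      diagonal_apply_ne _ hmn.ne']
    ring

/-- **Explicit entries of the limiting covariance matrix `Σ^Q_∞`.**
Fix `K ≥ 2`, `h > 0`, `V ∈ ℝ^K`, and `η ∈ ℝ^K` with nonnegative entries.  With
`Q = diag(η)`, `Q^{1/2} = diag(√η)`, `Δw = √h·Q^{1/2}·V`, and
`Σ^Q_∞ = 2·H·(Q ⊗ Q)·Hᵀ + (2/h)·H·(I − S)·(Q ⊗ (Δw·Δwᵀ))·(I − S)·Hᵀ`,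
the entries of `Σ^Q_∞` (rows/columns indexed by pairs `(i,j)` with `i < j`) are:
diagonal entries `2·η_i·η_j + (2/h)·η_i·(Δw_j)² + (2/h)·η_j·(Δw_i)²`, and for
`(i,j) ≠ (m,n)`: `0` if `{i,j} ∩ {m,n} = ∅`; `(2/h)·η_i·Δw_j·Δw_n` if `i = m, j ≠ n`;
`−(2/h)·η_i·Δw_j·Δw_m` if `i = n, j ≠ m`; `−(2/h)·η_j·Δw_i·Δw_n` if `j = m, i ≠ n`;
`(2/h)·η_j·Δw_i·Δw_m` if `j = n, i ≠ m`. -/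
theorem limiting_covariance_entries
    (K : ℕ) (hK : 2 ≤ K) (h : ℝ) (hh : 0 < h) (V η : Fin K → ℝ)
    (hnonneg : ∀ i, 0 ≤ η i) :
    letI Q : Matrix (Fin K) (Fin K) ℝ := Matrix.diagonal η
    letI Qhalf : Matrix (Fin K) (Fin K) ℝ := Matrix.diagonal fun i => Real.sqrt (η i)
    letI Δw : Fin K → ℝ := Real.sqrt h • Qhalf.mulVec V
    letI SQinf : Matrix (OrderedPairs K) (OrderedPairs K) ℝ :=
      (2 : ℝ) • (selH K * (Q ⊗ₖ Q) * (selH K)ᵀ) +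
        (2 / h) • (selH K * (1 - commS K) * (Q ⊗ₖ Matrix.vecMulVec Δw Δw) *
          (1 - commS K) * (selH K)ᵀ)
    ∀ p q : OrderedPairs K,
      letI i := p.1.1; letI j := p.1.2; letI m := q.1.1; letI n := q.1.2
      (p = q →
        SQinf p q = 2 * η i * η j + (2 / h) * η i * (Δw j) ^ 2 + (2 / h) * η j * (Δw i) ^ 2) ∧
      (i ≠ m → i ≠ n → j ≠ m → j ≠ n → SQinf p q = 0) ∧
      (i = m → j ≠ n → SQinf p q = (2 / h) * η i * Δw j * Δw n) ∧
      (i = n → j ≠ m → SQinf p q = -((2 / h) * η i * Δw j * Δw m)) ∧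
      (j = m → i ≠ n → SQinf p q = -((2 / h) * η j * Δw i * Δw n)) ∧
      (j = n → i ≠ m → SQinf p q = (2 / h) * η j * Δw i * Δw m) :=
  limiting_covariance_entries_general K h V η
end

section
/- For every natural number D ≥ 1, the series ∑_{r=D+1}^{∞} 1/r² and ∑_{r=D+1}^{∞} 1/r⁴ satisfy (∑_{r=D+1}^{∞} 1/r⁴) ≤ (2/(3D²))·(∑_{r=D+1}^{∞} 1/r²). -/
/-!
Both tails are compared with telescoping series. Since `1 / r ^ 2 ≥ 1 / r - 1 / (r + 1)`, the
tail `∑_{r > D} 1 / r ^ 2` is at least `1 / (D + 1)`; since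
`1 / (x + 1) ^ 4 ≤ (1 / x ^ 3 - 1 / (x + 1) ^ 3) / 3` for `x > 0`, the tail `∑_{r > D} 1 / r ^ 4`
is at most `1 / (3 D ^ 3)`. Finally `1 / (3 D ^ 3) ≤ 2 / (3 D ^ 2 (D + 1))` amounts to `D ≥ 1`.
-/

open Filter Topology

lemma hasSum_sub_succ_of_antitone {g : ℕ → ℝ} {l : ℝ} (hg : Antitone g)
    (hlim : Tendsto g atTop (𝓝 l)) : HasSum (fun n ↦ g n - g (n + 1)) (g 0 - l) := by
  rw [hasSum_iff_tendsto_nat_of_nonneg (fun n ↦ sub_nonneg.2 (hg n.le_succ))]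
  simp_rw [Finset.sum_range_sub']
  exact tendsto_const_nhds.sub hlim

lemma tsum_le_of_le_sub_succ {f g : ℕ → ℝ} (hf : ∀ n, 0 ≤ f n)
    (hfg : ∀ n, f n ≤ g n - g (n + 1)) (hlim : Tendsto g atTop (𝓝 0)) :
    ∑' n, f n ≤ g 0 := by
  have hg : Antitone g := antitone_nat_of_succ_le fun n ↦ by linarith [hf n, hfg n]
  have htel := hasSum_sub_succ_of_antitone hg hlim
  rw [sub_zero] at htel
  exact hasSum_le hfg (htel.summable.of_nonneg_of_le hf hfg).hasSum htel

lemma le_tsum_of_sub_succ_le {f g : ℕ → ℝ} (hf : Summable f) (hg : Antitone g)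
    (hfg : ∀ n, g n - g (n + 1) ≤ f n) (hlim : Tendsto g atTop (𝓝 0)) :
    g 0 ≤ ∑' n, f n := by
  have htel := hasSum_sub_succ_of_antitone hg hlim
  rw [sub_zero] at htel
  exact hasSum_le hfg htel hf.hasSum

lemma one_div_sub_one_div_add_one_le_one_div_sq {x : ℝ} (hx : 0 < x) :
    1 / x - 1 / (x + 1) ≤ 1 / x ^ 2 := by
  rw [div_sub_div _ _ hx.ne' (by positivity), div_le_div_iff₀ (by positivity) (by positivity)]
  nlinarith

lemma one_div_add_one_pow_four_le_sub {x : ℝ} (hx : 0 < x) :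
    1 / (x + 1) ^ 4 ≤ 1 / (3 * x ^ 3) - 1 / (3 * (x + 1) ^ 3) := by
  rw [div_sub_div _ _ (by positivity) (by positivity),
    div_le_div_iff₀ (by positivity) (by positivity)]
  nlinarith [pow_pos hx 3, pow_pos hx 4, pow_pos hx 5, pow_pos hx 6, pow_pos hx 7]

lemma tendsto_one_div_const_mul_nat_add_pow_atTop {c : ℝ} (hc : 0 < c) (a : ℝ) {p : ℕ}
    (hp : p ≠ 0) : Tendsto (fun k : ℕ ↦ 1 / (c * ((k : ℝ) + a) ^ p)) atTop (𝓝 0) := by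
  simp_rw [one_div]
  exact (((tendsto_pow_atTop hp).comp (tendsto_natCast_atTop_atTop.atTop_add
    tendsto_const_nhds)).const_mul_atTop hc).inv_tendsto_atTop

lemma summable_one_div_nat_add_add_one_sq {a : ℝ} (ha : 0 ≤ a) :
    Summable fun k : ℕ ↦ 1 / ((k : ℝ) + a + 1) ^ 2 := by
  refine ((Real.summable_one_div_nat_add_rpow (a + 1) 2).2 one_lt_two).congr fun k ↦ ?_
  rw [abs_of_nonneg (by positivity), Real.rpow_two, add_assoc]

lemma one_div_add_one_le_tsum_one_div_nat_add_add_one_sq {a : ℝ} (ha : 0 ≤ a) :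
    1 / (a + 1) ≤ ∑' k : ℕ, 1 / ((k : ℝ) + a + 1) ^ 2 := by
  have hanti : Antitone fun k : ℕ ↦ 1 / ((k : ℝ) + a + 1) := fun m n hmn ↦
    one_div_le_one_div_of_le (by positivity) (by gcongr)
  have hstep (k : ℕ) :
      1 / ((k : ℝ) + a + 1) - 1 / (((k + 1 : ℕ) : ℝ) + a + 1) ≤ 1 / ((k : ℝ) + a + 1) ^ 2 := by
    rw [Nat.cast_succ, add_right_comm (k : ℝ) 1 a]
    exact one_div_sub_one_div_add_one_le_one_div_sq (by positivity)
  have hlim : Tendsto (fun k : ℕ ↦ 1 / ((k : ℝ) + a + 1)) atTop (𝓝 0) := by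
    simpa [add_assoc] using tendsto_one_div_const_mul_nat_add_pow_atTop one_pos (a + 1) one_ne_zero
  simpa using le_tsum_of_sub_succ_le (summable_one_div_nat_add_add_one_sq ha) hanti hstep hlim

lemma tsum_one_div_nat_add_add_one_pow_four_le {a : ℝ} (ha : 0 < a) :
    ∑' k : ℕ, 1 / ((k : ℝ) + a + 1) ^ 4 ≤ 1 / (3 * a ^ 3) := by
  have hstep (k : ℕ) : 1 / ((k : ℝ) + a + 1) ^ 4 ≤
      1 / (3 * ((k : ℝ) + a) ^ 3) - 1 / (3 * (((k + 1 : ℕ) : ℝ) + a) ^ 3) := by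
    rw [Nat.cast_succ, add_right_comm (k : ℝ) 1 a]
    exact one_div_add_one_pow_four_le_sub (by positivity)
  simpa only [Nat.cast_zero, zero_add] using tsum_le_of_le_sub_succ (fun k ↦ by positivity) hstep
    (tendsto_one_div_const_mul_nat_add_pow_atTop three_pos a three_ne_zero)

/-- **Tail-sum ratio bound.**
For every natural number `D ≥ 1`,
`∑_{r=D+1}^{∞} 1/r⁴ ≤ (2/(3D²))·∑_{r=D+1}^{∞} 1/r²`
(the tails are written as sums over `r = D + 1 + k`, `k ∈ ℕ`). -/
theorem tail_sum_ratio_bound (D : ℕ) (hD : 1 ≤ D) :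
    (∑' k : ℕ, 1 / ((k : ℝ) + D + 1) ^ 4) ≤
      2 / (3 * (D : ℝ) ^ 2) * ∑' k : ℕ, 1 / ((k : ℝ) + D + 1) ^ 2 := by
  have hD1 : (1 : ℝ) ≤ D := by exact_mod_cast hD
  have hD0 : (0 : ℝ) < D := by linarith
  calc (∑' k : ℕ, 1 / ((k : ℝ) + D + 1) ^ 4) ≤ 1 / (3 * (D : ℝ) ^ 3) :=
        tsum_one_div_nat_add_add_one_pow_four_le hD0
    _ ≤ 2 / (3 * (D : ℝ) ^ 2) * (1 / ((D : ℝ) + 1)) := by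
        rw [div_mul_div_comm, mul_one, div_le_div_iff₀ (by positivity) (by positivity)]
        nlinarith
    _ ≤ 2 / (3 * (D : ℝ) ^ 2) * ∑' k : ℕ, 1 / ((k : ℝ) + D + 1) ^ 2 := by
        gcongr
        exact one_div_add_one_le_tsum_one_div_nat_add_add_one_sq hD0.le
end
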